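/- Let θ̂ be the projection of y/λ onto F = {θ : |θ^T b_j| ≤ 1 ∀ j} (the dual lasso solution) and let ŵ solve the lasso. The sphere screening test with center q = y/λ and radius r = ‖y/λ − θ̂_f‖₂, for any feasible θ_f ∈ F, is safe: if |q^T b_i| < 1 − r‖b_i‖₂ then ŵ_i = 0. -/

import Mathlib

/-!
Perturbing a single coordinate of the lasso minimiser `ŵ` by a factor `1 + t` changes the
objective by a quadratic in `t` with no constant term, so its linear coefficient vanishes. This is
complementary slackness `⟪u, b j⟫ ŵ j = λ |ŵ j|` for the residual `u = y - B ŵ`, where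
`B ŵ = ∑ ŵ i • b i`; hence `|⟪θ̂, b j⟫| ≥ 1` whenever `ŵ j ≠ 0`, where `θ̂ = u / λ`. Summed over
`j` it gives `⟪B ŵ, u⟫ = λ ‖ŵ‖₁ ≥ λ ⟪B ŵ, θ⟫` for every dual-feasible `θ`, which expands to
`‖y / λ - θ̂‖ ≤ ‖y / λ - θ‖`. So `θ̂` lies in the sphere of radius `r` around `y / λ`, on which
`|⟪·, b i⟫| ≤ |⟪y / λ, b i⟫| + r ‖b i‖ < 1`.
-/

open RealInnerProductSpace Filter Topology

lemma eq_zero_of_eventually_nonneg_mul_add_sq {a c : ℝ}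
    (h : ∀ᶠ t in 𝓝 0, 0 ≤ a * t + c * t ^ 2) : a = 0 := by
  have hmin : IsLocalMin (fun t => a * t + c * t ^ 2) 0 := by
    filter_upwards [h] with t ht
    simpa using ht
  have hderiv : HasDerivAt (fun t => a * t + c * t ^ 2) a 0 := by
    simpa using
      ((hasDerivAt_id (0 : ℝ)).const_mul a).fun_add ((hasDerivAt_pow 2 (0 : ℝ)).const_mul c)
  exact hmin.hasDerivAt_eq_zero hderiv

lemma abs_inner_le_of_norm_sub_le {E : Type*} [NormedAddCommGroup E] [InnerProductSpace ℝ E]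
    {θ q : E} {r : ℝ} (hθ : ‖θ - q‖ ≤ r) (v : E) :
    |⟪θ, v⟫| ≤ |⟪q, v⟫| + r * ‖v‖ :=
  calc |⟪θ, v⟫| = |⟪q, v⟫ + ⟪θ - q, v⟫| := by rw [inner_sub_left, add_sub_cancel]
    _ ≤ |⟪q, v⟫| + ‖θ - q‖ * ‖v‖ :=
      (abs_add_le _ _).trans (by gcongr; exact abs_real_inner_le_norm _ _)
    _ ≤ |⟪q, v⟫| + r * ‖v‖ := by gcongr

section Lasso

variable {ι E : Type*} [Fintype ι] [NormedAddCommGroup E] [InnerProductSpace ℝ E]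

def lassoResidual (b : ι → E) (y : E) (w : ι → ℝ) : E :=
  y - ∑ i, w i • b i

noncomputable def lassoObjective (b : ι → E) (y : E) (lam : ℝ) (w : ι → ℝ) : ℝ :=
  1 / 2 * ‖lassoResidual b y w‖ ^ 2 + lam * ∑ i, |w i|

lemma lassoObjective_add_single [DecidableEq ι] (b : ι → E) (y : E) (lam : ℝ) (w : ι → ℝ)
    (j : ι) {t : ℝ} (ht : -1 ≤ t) :
    lassoObjective b y lam (w + Pi.single j (t * w j)) =
      lassoObjective b y lam w + (lam * |w j| - ⟪lassoResidual b y w, b j⟫ * w j) * t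
        + w j ^ 2 * ‖b j‖ ^ 2 / 2 * t ^ 2 := by
  set v : ι → ℝ := w + Pi.single j (t * w j) with hv
  have hres : lassoResidual b y v = lassoResidual b y w - (t * w j) • b j := by
    simp [lassoResidual, hv, add_smul, Finset.sum_add_distrib, Pi.single_apply,
      sub_add_eq_sub_sub]
  have habs : ∑ i, |v i| = ∑ i, |w i| + t * |w j| := by
    have : ∀ i, |v i| = |w i| + (Pi.single j (t * |w j|) : ι → ℝ) i := by
      intro i
      rcases eq_or_ne i j with rfl | hij
      · simp [hv, ← one_add_mul, abs_mul, abs_of_nonneg (by linarith : 0 ≤ 1 + t)]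
      · simp [hv, hij]
    simp [this, Finset.sum_add_distrib]
  simp only [lassoObjective, hres, habs, norm_sub_sq_real, real_inner_smul_right, norm_smul,
    Real.norm_eq_abs, mul_pow, sq_abs]
  ring

variable {b : ι → E} {y : E} {lam : ℝ} {wh : ι → ℝ}

lemma inner_lassoResidual_mul_eq_of_isMinimizer
    (hmin : ∀ w, lassoObjective b y lam wh ≤ lassoObjective b y lam w) (j : ι) :
    ⟪lassoResidual b y wh, b j⟫ * wh j = lam * |wh j| := by
  classical
  have hnonneg : ∀ᶠ t in 𝓝 (0 : ℝ),
      0 ≤ (lam * |wh j| - ⟪lassoResidual b y wh, b j⟫ * wh j) * t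
        + wh j ^ 2 * ‖b j‖ ^ 2 / 2 * t ^ 2 := by
    filter_upwards [Ioi_mem_nhds (show (-1 : ℝ) < 0 by norm_num)] with t ht
    have := hmin (wh + Pi.single j (t * wh j))
    rw [lassoObjective_add_single b y lam wh j ht.le] at this
    linarith
  linarith [eq_zero_of_eventually_nonneg_mul_add_sq hnonneg]

lemma one_le_abs_inner_inv_smul_lassoResidual
    (hmin : ∀ w, lassoObjective b y lam wh ≤ lassoObjective b y lam w) (hlam : 0 < lam)
    {j : ι} (hj : wh j ≠ 0) :
    1 ≤ |⟪lam⁻¹ • lassoResidual b y wh, b j⟫| := by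
  have hle : lam ≤ |⟪lassoResidual b y wh, b j⟫| := by
    refine le_of_mul_le_mul_right ?_ (abs_pos.mpr hj)
    calc lam * |wh j| = ⟪lassoResidual b y wh, b j⟫ * wh j :=
          (inner_lassoResidual_mul_eq_of_isMinimizer hmin j).symm
      _ ≤ |⟪lassoResidual b y wh, b j⟫| * |wh j| := by rw [← abs_mul]; exact le_abs_self _
  rw [real_inner_smul_left, abs_mul, abs_of_pos (inv_pos.mpr hlam)]
  exact (le_inv_mul_iff₀ hlam).mpr (by simpa using hle)

lemma norm_sum_smul_le_of_isMinimizer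
    (hmin : ∀ w, lassoObjective b y lam wh ≤ lassoObjective b y lam w) (hlam : 0 ≤ lam)
    {θ : E} (hθ : ∀ j, |⟪θ, b j⟫| ≤ 1) :
    ‖∑ i, wh i • b i‖ ≤ ‖y - lam • θ‖ := by
  set S := ∑ i, wh i • b i
  set u := lassoResidual b y wh
  have hSu : ⟪S, u⟫ = lam * ∑ i, |wh i| := by
    simp only [S, sum_inner, real_inner_smul_left, Finset.mul_sum]
    refine Finset.sum_congr rfl fun i _ => ?_
    rw [real_inner_comm, mul_comm, inner_lassoResidual_mul_eq_of_isMinimizer hmin i]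
  have hSθ : ⟪S, θ⟫ ≤ ∑ i, |wh i| := by
    simp only [S, sum_inner, real_inner_smul_left]
    refine Finset.sum_le_sum fun i _ => ?_
    calc wh i * ⟪b i, θ⟫ ≤ |wh i| * |⟪θ, b i⟫| := by
          rw [real_inner_comm, ← abs_mul]; exact le_abs_self _
      _ ≤ |wh i| := mul_le_of_le_one_right (abs_nonneg _) (hθ i)
  have hcross : 0 ≤ ⟪S, u - lam • θ⟫ := by
    rw [inner_sub_right, real_inner_smul_right, hSu]
    nlinarith
  have hy : y - lam • θ = S + (u - lam • θ) := by simp only [u, lassoResidual]; abel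
  refine le_of_sq_le_sq ?_ (norm_nonneg _)
  rw [hy, norm_add_sq_real]
  nlinarith [sq_nonneg ‖u - lam • θ‖]

lemma norm_inv_smul_lassoResidual_sub_le
    (hmin : ∀ w, lassoObjective b y lam wh ≤ lassoObjective b y lam w) (hlam : 0 < lam)
    {θ : E} (hθ : ∀ j, |⟪θ, b j⟫| ≤ 1) :
    ‖lam⁻¹ • lassoResidual b y wh - lam⁻¹ • y‖ ≤ ‖lam⁻¹ • y - θ‖ := by
  have hres : lam⁻¹ • lassoResidual b y wh - lam⁻¹ • y = -(lam⁻¹ • ∑ i, wh i • b i) := by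
    simp [lassoResidual, smul_sub]
  have hfeas : lam⁻¹ • y - θ = lam⁻¹ • (y - lam • θ) := by
    rw [smul_sub, smul_smul, inv_mul_cancel₀ hlam.ne', one_smul]
  rw [hres, norm_neg, hfeas, norm_smul, norm_smul]
  gcongr
  exact norm_sum_smul_le_of_isMinimizer hmin hlam.le hθ

end Lasso

theorem stmt13 (d p : ℕ)
    (b : Fin p → EuclideanSpace ℝ (Fin d)) (y : EuclideanSpace ℝ (Fin d))
    (lam : ℝ) (hlam : 0 < lam)
    (f : (Fin p → ℝ) → ℝ)
    (hf : ∀ w, f w = (1/2) * ‖y - ∑ i, w i • b i‖ ^ 2 + lam * ∑ i, |w i|)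
    (wh : Fin p → ℝ) (hopt : ∀ w, f wh ≤ f w)
    (θf : EuclideanSpace ℝ (Fin d)) (hθf : ∀ j, |(inner ℝ θf (b j) : ℝ)| ≤ 1)
    (r : ℝ) (hr : r = ‖lam⁻¹ • y - θf‖)
    (i : Fin p)
    (htest : |(inner ℝ (lam⁻¹ • y) (b i) : ℝ)| < 1 - r * ‖b i‖) :
    wh i = 0 := by
  obtain rfl : f = lassoObjective b y lam := funext hf
  have hsphere : ‖lam⁻¹ • lassoResidual b y wh - lam⁻¹ • y‖ ≤ r :=
    hr ▸ norm_inv_smul_lassoResidual_sub_le hopt hlam hθf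
  by_contra hi
  have hactive := one_le_abs_inner_inv_smul_lassoResidual hopt hlam hi
  have hbound := abs_inner_le_of_norm_sub_le hsphere (b i)
  linarith
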